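/- arXiv:2005.08651 — 6 statements merged into one kernel-verified Lean document; each statement's English description precedes it below -/
import Mathlib

section
/- Let p ≥ 5 be prime and let 1 = q₀ < q₁ < ... < q₍₍p₋₃₎/₂₎ be the quadratic residues modulo p in increasing order. Define dₙ = (qₙ + qₙ₊₁) mod 2 for n = 0, ..., (p-5)/2. Then the sum D(1) = Σₙ dₙ over 𝔽₂ equals 0 if p ≡ 3 (mod 8) and equals 1 otherwise. -/
/-!
Modulo 2 the sum telescopes: `dₙ ≡ qₙ₊₁ - qₙ`, so `D(1) ≡ q_max - q₀ ≡ q_max + 1`, and only the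
parity of the largest quadratic residue `q_max < p` matters. If `p ≢ 3 (mod 4)` then `-1` is a
residue and `q_max = p - 1` is even. If `p ≡ 3 (mod 8)` then `-1` is not a residue but `-2` is, so
`q_max = p - 2` is odd. If `p ≡ 7 (mod 8)` then `2` is a residue, and an odd `q_max` would make
`p - (p - q_max)/2 ≡ q_max/2` a larger residue; hence `q_max` is even.
-/

theorem ZMod.natCast_sub_eq_neg {n c : ℕ} (hc : c ≤ n) :
    ((n - c : ℕ) : ZMod n) = -(c : ZMod n) := by
  rw [Nat.cast_sub hc, ZMod.natCast_self, zero_sub]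

theorem ZMod.exists_sq_mod_eq_iff_isSquare {n m : ℕ} (hm : m < n) :
    (∃ x : ℕ, x ^ 2 % n = m) ↔ IsSquare (m : ZMod n) := by
  have : NeZero n := ⟨by omega⟩
  constructor
  · rintro ⟨x, rfl⟩
    exact ⟨x, by rw [ZMod.natCast_mod]; push_cast; ring⟩
  · rintro ⟨y, hy⟩
    refine ⟨y.val, ?_⟩
    rw [← ZMod.val_natCast, Nat.cast_pow, ZMod.natCast_zmod_val, sq, ← hy,
      ZMod.val_natCast_of_lt hm]

theorem ZMod.sum_range_natCast_add_succ_mod_two (q : ℕ → ℕ) (N : ℕ) :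
    ∑ n ∈ Finset.range N, (((q n + q (n + 1)) % 2 : ℕ) : ZMod 2) = q N + q 0 := by
  rw [← CharTwo.sub_eq_add, ← Finset.sum_range_sub (fun n => (q n : ZMod 2))]
  refine Finset.sum_congr rfl fun n _ => ?_
  rw [ZMod.natCast_mod, CharTwo.sub_eq_add]
  push_cast
  ring

section LargestSquare

variable {p : ℕ} [Fact p.Prime] {M : ℕ}

theorem sub_le_of_isSquare_neg (hmax : ∀ m, 0 < m → m < p → IsSquare (m : ZMod p) → m ≤ M)
    {c : ℕ} (hc0 : 0 < c) (hcp : c < p) (hc : IsSquare (-(c : ZMod p))) : p - c ≤ M :=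
  hmax _ (by omega) (by omega) (by rwa [ZMod.natCast_sub_eq_neg hcp.le])

theorem eq_sub_one_of_isSquare_neg_one (hM : M < p)
    (hmax : ∀ m, 0 < m → m < p → IsSquare (m : ZMod p) → m ≤ M)
    (h : IsSquare (-1 : ZMod p)) : M = p - 1 := by
  have := sub_le_of_isSquare_neg hmax one_pos (Fact.out : p.Prime).one_lt (by simpa using h)
  omega

theorem ne_sub_one_of_not_isSquare_neg_one (hMsq : IsSquare (M : ZMod p))
    (h : ¬IsSquare (-1 : ZMod p)) : M ≠ p - 1 := by
  rintro rfl
  rw [ZMod.natCast_sub_eq_neg (Fact.out : p.Prime).one_le, Nat.cast_one] at hMsq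
  exact h hMsq

theorem even_of_isSquare_two (hp : p ≠ 2) (hM : M < p) (hMsq : IsSquare (M : ZMod p))
    (hmax : ∀ m, 0 < m → m < p → IsSquare (m : ZMod p) → m ≤ M)
    (h : IsSquare (2 : ZMod p)) : Even M := by
  have hp_odd := (Fact.out : p.Prime).odd_of_ne_two hp
  by_contra hM_odd
  rw [Nat.not_even_iff_odd] at hM_odd
  obtain ⟨k, hk⟩ : Even (p - M) := Nat.Odd.sub_odd hp_odd hM_odd
  have hk_cast : -(M : ZMod p) = 2 * k := by
    rw [← ZMod.natCast_sub_eq_neg hM.le, hk]; push_cast; ring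
  have h2 : (2 : ZMod p) ≠ 0 := Ring.two_ne_zero (by rwa [ZMod.ringChar_zmod_n])
  have hk_sq : IsSquare (-(k : ZMod p)) := by
    rw [show -(k : ZMod p) = M / 2 by rw [eq_div_iff h2, neg_mul, mul_comm, ← hk_cast, neg_neg]]
    exact hMsq.div h
  have := sub_le_of_isSquare_neg hmax (by omega) (by omega) hk_sq
  omega

theorem mod_two_eq_of_isGreatest_square (hp : p ≠ 2) (hM : M < p) (hMsq : IsSquare (M : ZMod p))
    (hmax : ∀ m, 0 < m → m < p → IsSquare (m : ZMod p) → m ≤ M) :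
    M % 2 = if p % 8 = 3 then 1 else 0 := by
  have hneg1 := ZMod.exists_sq_eq_neg_one_iff (p := p)
  have hp_odd := (Fact.out : p.Prime).odd_of_ne_two hp
  have hp_mod : p % 8 = 1 ∨ p % 8 = 3 ∨ p % 8 = 5 ∨ p % 8 = 7 := by
    rcases hp_odd with ⟨k, rfl⟩; omega
  rcases hp_mod with h8 | h8 | h8 | h8
  · have := eq_sub_one_of_isSquare_neg_one hM hmax (hneg1.mpr (by omega))
    rw [if_neg (by omega)]; omega
  · have := sub_le_of_isSquare_neg hmax two_pos (by omega)
      (by exact_mod_cast (ZMod.exists_sq_eq_neg_two_iff hp).mpr (by omega))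
    have := ne_sub_one_of_not_isSquare_neg_one hMsq (hneg1.not.mpr (by omega))
    rw [if_pos h8]; omega
  · have := eq_sub_one_of_isSquare_neg_one hM hmax (hneg1.mpr (by omega))
    rw [if_neg (by omega)]; omega
  · have := even_of_isSquare_two hp hM hMsq hmax ((ZMod.exists_sq_eq_two_iff hp).mpr (by omega))
    rw [if_neg (by omega)]; exact Nat.even_iff.mp this

end LargestSquare

theorem sum_of_dn_eq (p : ℕ) (hp : p.Prime) (hp5 : 5 ≤ p) (q : ℕ → ℕ)
    (hmono : ∀ i j : ℕ, i < j → j ≤ (p - 3) / 2 → q i < q j)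
    (hbij : ∀ m : ℕ, (1 ≤ m ∧ m ≤ p - 1 ∧ ∃ x : ℕ, x ^ 2 % p = m) ↔
      ∃ n ≤ (p - 3) / 2, q n = m)
    (d : ℕ → ℕ) (hd : ∀ n ≤ (p - 5) / 2, d n = (q n + q (n + 1)) % 2) :
    (∑ n ∈ Finset.range ((p - 3) / 2), (d n : ZMod 2)) =
      if p % 8 = 3 then 0 else 1 := by
  have : Fact p.Prime := ⟨hp⟩
  set N := (p - 3) / 2
  have hq_mem (n : ℕ) (hn : n ≤ N) : 1 ≤ q n ∧ q n ≤ p - 1 ∧ IsSquare (q n : ZMod p) := by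
    obtain ⟨h1, hp1, hsq⟩ := (hbij (q n)).mpr ⟨n, hn, rfl⟩
    exact ⟨h1, hp1, (ZMod.exists_sq_mod_eq_iff_isSquare (by omega)).mp hsq⟩
  have hq_le (n : ℕ) (hn : n ≤ N) : q n ≤ q N := by
    rcases hn.lt_or_eq with h | rfl
    exacts [(hmono n N h le_rfl).le, le_rfl]
  have hq0 : q 0 = 1 := by
    obtain ⟨n, hn, hqn⟩ := (hbij 1).mp ⟨le_rfl, by omega, 1, Nat.mod_eq_of_lt (by omega)⟩
    rcases Nat.eq_zero_or_pos n with rfl | hpos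
    · exact hqn
    · have := hmono 0 n hpos hn
      have := (hq_mem 0 (Nat.zero_le _)).1
      omega
  have hmax (m : ℕ) (hm0 : 0 < m) (hmp : m < p) (hsq : IsSquare (m : ZMod p)) : m ≤ q N := by
    obtain ⟨n, hn, rfl⟩ := (hbij m).mp
      ⟨hm0, by omega, (ZMod.exists_sq_mod_eq_iff_isSquare hmp).mpr hsq⟩
    exact hq_le n hn
  have hparity := mod_two_eq_of_isGreatest_square (by omega) (by have := hq_mem N le_rfl; omega)
    (hq_mem N le_rfl).2.2 hmax
  rw [Finset.sum_congr rfl fun n hn => by rw [hd n (by have := Finset.mem_range.mp hn; omega)],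
    ZMod.sum_range_natCast_add_succ_mod_two, hq0, ← ZMod.natCast_mod, hparity]
  split_ifs <;> decide
end

section
/- Let r be an odd prime such that 2 is a primitive root modulo r, and let β be a primitive r-th root of unity in an extension field of 𝔽₂. Let (sₙ) be a T-periodic binary sequence with r dividing T, and set S(X) = Σₙ₌₀^{T-1} sₙXⁿ over 𝔽₂. If S(β) = 0, then for every h with 0 ≤ h ≤ r-1, the sum Σⱼ₌₀^{T/r - 1} s_{h+jr} (in 𝔽₂) equals S(1). -/
open Polynomial Finset

/-!
Since `β ^ r = 1`, grouping the terms of `S(β)` by the residue of the exponent mod `r` gives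
`S(β) = ∑_{h < r} c_h β^h`, where `c_h` is the sum of `s` over the residue class of `h`.
As `2` has order `r - 1 = φ(r)` mod `r`, the cyclotomic polynomial `Φ_r = 1 + X + ⋯ + X^{r-1}` is
irreducible over `𝔽₂`, hence is the minimal polynomial of `β`. So `Φ_r` divides
`∑_{h < r} c_h X^h`, which has degree at most `r - 1`; this forces all `c_h` to be equal to some
`a`, and then `S(1) = r • a = a` because `r` is odd.
-/

theorem Finset.sum_range_mul_eq_sum_residue_classes {M : Type*} [AddCommMonoid M] (f : ℕ → M)
    (r m : ℕ) :
    ∑ n ∈ range (m * r), f n = ∑ h ∈ range r, ∑ j ∈ range m, f (h + j * r) := by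
  induction m with
  | zero => simp
  | succ m ih =>
    rw [Nat.succ_mul, sum_range_add, ih, ← sum_add_distrib]
    refine sum_congr rfl fun h _ => ?_
    rw [sum_range_succ, Nat.add_comm (m * r) h]

theorem Finset.sum_range_mul_mul_pow_of_pow_eq_one {R : Type*} [CommSemiring R] (f : ℕ → R)
    {β : R} {r : ℕ} (hβ : β ^ r = 1) (m : ℕ) :
    ∑ n ∈ range (m * r), f n * β ^ n = ∑ h ∈ range r, (∑ j ∈ range m, f (h + j * r)) * β ^ h := by
  rw [sum_range_mul_eq_sum_residue_classes]
  refine sum_congr rfl fun h _ => ?_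
  rw [sum_mul]
  refine sum_congr rfl fun j _ => ?_
  rw [pow_add, pow_mul', hβ, one_pow, mul_one]

theorem ZMod.irreducible_cyclotomic_of_orderOf_eq_totient {p n : ℕ} [Fact p.Prime]
    (hpn : ¬p ∣ n) (h : orderOf (p : ZMod n) = n.totient) :
    Irreducible (cyclotomic n (ZMod p)) :=
  ZMod.irreducible_of_dvd_cyclotomic_of_natDegree hpn dvd_rfl <| by
    rw [natDegree_cyclotomic, ← orderOf_units, ZMod.coe_unitOfCoprime, h]

theorem IsPrimitiveRoot.minpoly_eq_cyclotomic {K L : Type*} [Field K] [Field L] [Algebra K L]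
    {β : L} {n : ℕ} (hβ : IsPrimitiveRoot β n) (hn : 0 < n) (hirr : Irreducible (cyclotomic n K)) :
    minpoly K β = cyclotomic n K := by
  refine (minpoly.eq_of_irreducible_of_monic hirr ?_ (cyclotomic.monic n K)).symm
  rw [aeval_def, eval₂_eq_eval_map, map_cyclotomic]
  exact hβ.isRoot_cyclotomic hn

theorem Polynomial.coeff_sum_range_C_mul_X_pow {R : Type*} [Semiring R] (c : ℕ → R) {r i : ℕ}
    (hi : i < r) : (∑ j ∈ range r, C (c j) * X ^ j).coeff i = c i := by
  simp [hi]

theorem Polynomial.exists_eq_of_cyclotomic_prime_dvd {R : Type*} [CommRing R] [Nontrivial R]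
    {r : ℕ} [Fact r.Prime] (c : ℕ → R)
    (hdvd : cyclotomic r R ∣ ∑ i ∈ range r, C (c i) * X ^ i) : ∃ a, ∀ i < r, c i = a := by
  set Q := ∑ i ∈ range r, C (c i) * X ^ i
  have hdeg : Q.natDegree ≤ (cyclotomic r R).natDegree := by
    rw [natDegree_cyclotomic, Nat.totient_prime Fact.out]
    refine natDegree_sum_le_of_forall_le _ _ fun i hi => ?_
    exact (natDegree_C_mul_X_pow_le (c i) i).trans (by grind)
  obtain ⟨a, hQ⟩ : ∃ a, Q = C a * cyclotomic r R :=
    ⟨_, eq_leadingCoeff_mul_of_monic_of_dvd_of_natDegree_le (cyclotomic.monic r R) hdvd hdeg⟩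
  refine ⟨a, fun i hi => ?_⟩
  have hcoeff := congrArg (coeff · i) hQ
  simp only [Q, coeff_sum_range_C_mul_X_pow c hi, coeff_C_mul, cyclotomic_prime] at hcoeff
  simpa [finsetSum_coeff, coeff_X_pow, hi] using hcoeff

theorem sum_over_residue_classes_of_root_general (r T : ℕ) (hr : r.Prime) (hodd : Odd r)
    (hprim : orderOf (2 : ZMod r) = r - 1) (hdvd : r ∣ T)
    (F : Type*) [Field F] [Algebra (ZMod 2) F] (β : F) (hβ : IsPrimitiveRoot β r)
    (s : ℕ → ZMod 2)
    (hS : ∑ n ∈ Finset.range T, algebraMap (ZMod 2) F (s n) * β ^ n = 0) :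
    ∀ h ≤ r - 1, ∑ j ∈ Finset.range (T / r), s (h + j * r) =
      ∑ n ∈ Finset.range T, s n := by
  have : Fact r.Prime := ⟨hr⟩
  obtain ⟨m, rfl⟩ := hdvd
  rw [Nat.mul_div_cancel_left m hr.pos]
  rw [mul_comm r m] at hS ⊢
  set c : ℕ → ZMod 2 := fun h => ∑ j ∈ range m, s (h + j * r)
  have hirr : Irreducible (cyclotomic r (ZMod 2)) :=
    ZMod.irreducible_cyclotomic_of_orderOf_eq_totient hodd.not_two_dvd_nat
      (by rw [Nat.cast_ofNat, hprim, Nat.totient_prime hr])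
  have hroot : aeval β (∑ i ∈ range r, C (c i) * X ^ i) = 0 := by
    rw [← hS, sum_range_mul_mul_pow_of_pow_eq_one _ hβ.pow_eq_one]
    simp [c, aeval_C]
  obtain ⟨a, ha⟩ := exists_eq_of_cyclotomic_prime_dvd c <|
    hβ.minpoly_eq_cyclotomic hr.pos hirr ▸ minpoly.dvd (ZMod 2) β hroot
  have htotal : ∑ n ∈ range (m * r), s n = a := by
    rw [sum_range_mul_eq_sum_residue_classes, sum_congr rfl fun i hi => ha i (mem_range.mp hi),
      sum_const, card_range, nsmul_eq_mul, ZMod.natCast_eq_one_iff_odd.mpr hodd, one_mul]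
  intro h hh
  rw [htotal]
  exact ha h (by have := hr.two_le; omega)

theorem sum_over_residue_classes_of_root (r T : ℕ) (hr : r.Prime) (hodd : Odd r)
    (hprim : orderOf (2 : ZMod r) = r - 1) (hdvd : r ∣ T)
    (F : Type*) [Field F] [Algebra (ZMod 2) F] (β : F) (hβ : IsPrimitiveRoot β r)
    (s : ℕ → ZMod 2) (hper : ∀ n, s (n + T) = s n)
    (hS : ∑ n ∈ Finset.range T, algebraMap (ZMod 2) F (s n) * β ^ n = 0) :
    ∀ h ≤ r - 1, ∑ j ∈ Finset.range (T / r), s (h + j * r) =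
      ∑ n ∈ Finset.range T, s n :=
  sum_over_residue_classes_of_root_general r T hr hodd hprim hdvd F β hβ s hS
end

section
/- Let (sₙ) be a T-periodic sequence over 𝔽₂ and S(X) = Σₙ₌₀^{T-1} sₙXⁿ. Then the linear complexity of (sₙ) equals T - deg(gcd(X^T - 1, S(X))). -/
/-!
A recurrence `s (n + L) = ∑ i < L, c i * s (n + i)` amounts to a polynomial
`u = 1 - ∑ i < L, c i * X ^ (L - i)` of degree at most `L` such that `u * σ`, where `σ = ∑ sₙ Xⁿ`
is the generating power series, has no coefficients in degrees `≥ L`. Periodicity gives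
`(1 - X ^ T) * σ = S`, and since `deg (u * S) < L + T` this happens exactly when
`X ^ T - 1 ∣ u * S`, that is, when `q = (X ^ T - 1) / gcd (X ^ T - 1) S` divides `u`. As `q` divides
`X ^ T - 1`, its constant term is nonzero, so `q` scaled to constant term `1` is admissible and
the least such `L` is `deg q = T - deg gcd`.
-/

open Polynomial

/-- The linear complexity of a binary sequence: the least `L` such that the sequence
satisfies a linear recurrence of order `L` over `𝔽₂`. -/
noncomputable def LinearComplexity (s : ℕ → ZMod 2) : ℕ :=
  sInf {L : ℕ | ∃ c : ℕ → ZMod 2, ∀ n : ℕ,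
    s (n + L) = ∑ i ∈ Finset.range L, c i * s (n + i)}

open Finset

def HasLinearRecurrence {R : Type*} [Semiring R] (s : ℕ → R) (L : ℕ) : Prop :=
  ∃ c : ℕ → R, ∀ n, s (n + L) = ∑ i ∈ range L, c i * s (n + i)

theorem Polynomial.natDegree_X_pow_sub_one {R : Type*} [Ring R] [Nontrivial R] (n : ℕ) :
    (X ^ n - 1 : R[X]).natDegree = n := by
  simpa using natDegree_X_pow_sub_C (n := n) (r := (1 : R))

@[norm_cast]
theorem Polynomial.coe_finset_sum {R ι : Type*} [CommSemiring R] (s : Finset ι) (f : ι → R[X]) :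
    ((∑ i ∈ s, f i : R[X]) : PowerSeries R) = ∑ i ∈ s, (f i : PowerSeries R) :=
  map_sum coeToPowerSeries.ringHom f s

theorem PowerSeries.coeff_C_mul_X_pow_mul_mk {R : Type*} [CommRing R] (s : ℕ → R) (a : R)
    {k d : ℕ} (h : k ≤ d) : coeff d (C a * X ^ k * mk s) = a * s (d - k) := by
  rw [mul_assoc, coeff_C_mul, coeff_X_pow_mul', if_pos h, coeff_mk]

theorem coeff_add_coe_mul_mk {R : Type*} [CommRing R] (s : ℕ → R) {u : R[X]} {L : ℕ}
    (hu : u.natDegree ≤ L) (n : ℕ) :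
    PowerSeries.coeff (n + L) ((u : PowerSeries R) * PowerSeries.mk s) =
      ∑ i ∈ range (L + 1), u.coeff (L - i) * s (n + i) := by
  conv_lhs => rw [u.as_sum_range_C_mul_X_pow' (Nat.lt_succ_of_le hu)]
  push_cast
  rw [sum_mul, map_sum, ← sum_range_reflect]
  refine sum_congr rfl fun i hi => ?_
  have hi : i ≤ L := Nat.lt_succ_iff.mp (mem_range.mp hi)
  rw [PowerSeries.coeff_C_mul_X_pow_mul_mk s _ (by omega), Nat.succ_sub_one,
    show n + L - (L - i) = n + i by omega]

theorem hasLinearRecurrence_iff_exists_polynomial {R : Type*} [CommRing R] {s : ℕ → R} {L : ℕ} :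
    HasLinearRecurrence s L ↔ ∃ u : R[X], u.coeff 0 = 1 ∧ u.natDegree ≤ L ∧
      ∀ n, PowerSeries.coeff (n + L) ((u : PowerSeries R) * PowerSeries.mk s) = 0 := by
  constructor
  · rintro ⟨c, hc⟩
    refine ⟨1 - ∑ i ∈ range L, C (c i) * X ^ (L - i), ?_, ?_, fun n => ?_⟩
    · rw [coeff_sub, coeff_one_zero, finsetSum_coeff, sub_eq_self]
      exact sum_eq_zero fun i hi => by
        rw [coeff_C_mul_X_pow, if_neg (by rw [mem_range] at hi; omega)]
    · refine (natDegree_sub_le _ _).trans (max_le (by simp) ?_)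
      exact natDegree_sum_le_of_forall_le _ _ fun i _ =>
        (natDegree_C_mul_X_pow_le _ _).trans (by omega)
    · push_cast
      rw [sub_mul, one_mul, map_sub, PowerSeries.coeff_mk, sum_mul, map_sum, hc n, sub_eq_zero]
      refine sum_congr rfl fun i hi => ?_
      rw [mem_range] at hi
      rw [PowerSeries.coeff_C_mul_X_pow_mul_mk s _ (by omega),
        show n + L - (L - i) = n + i by omega]
  · rintro ⟨u, hu0, huL, hu⟩
    refine ⟨fun i => -u.coeff (L - i), fun n => ?_⟩
    have h := hu n
    rw [coeff_add_coe_mul_mk s huL, sum_range_succ, Nat.sub_self, hu0, one_mul] at h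
    simp only [neg_mul, sum_neg_distrib]
    exact eq_neg_of_add_eq_zero_right h

theorem Function.Periodic.coe_sum_range_C_mul_X_pow {R : Type*} [CommRing R] {s : ℕ → R}
    {T : ℕ} (hs : Function.Periodic s T) :
    ((∑ n ∈ range T, C (s n) * X ^ n : R[X]) : PowerSeries R) =
      (1 - PowerSeries.X ^ T) * PowerSeries.mk s := by
  ext m
  rw [coeff_coe, finsetSum_coeff, sub_mul, one_mul, map_sub, PowerSeries.coeff_mk,
    PowerSeries.coeff_X_pow_mul']
  simp only [coeff_C_mul_X_pow, sum_ite_eq, mem_range, PowerSeries.coeff_mk]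
  split_ifs with hm hTm hTm
  · omega
  · rw [sub_zero]
  · rw [← hs (m - T), Nat.sub_add_cancel hTm, sub_self]
  · omega

theorem Function.Periodic.forall_coeff_add_coe_mul_mk_eq_zero_iff_dvd {R : Type*} [CommRing R]
    [Nontrivial R] {s : ℕ → R} {T : ℕ} (hs : Function.Periodic s T) (hT : 0 < T) {u : R[X]}
    {L : ℕ} (hu : u.natDegree ≤ L) :
    (∀ n, PowerSeries.coeff (n + L) ((u : PowerSeries R) * PowerSeries.mk s) = 0) ↔
      (X ^ T - 1 : R[X]) ∣ u * ∑ n ∈ range T, C (s n) * X ^ n := by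
  have hS := hs.coe_sum_range_C_mul_X_pow
  constructor
  · intro h
    have htrunc : ((PowerSeries.trunc L ((u : PowerSeries R) * PowerSeries.mk s) : R[X]) :
        PowerSeries R) = u * PowerSeries.mk s := by
      ext m
      rw [coeff_coe, PowerSeries.coeff_trunc, ite_eq_left_iff, not_lt]
      intro hm
      obtain ⟨n, rfl⟩ := Nat.exists_eq_add_of_le' hm
      exact (h n).symm
    refine ⟨-PowerSeries.trunc L ((u : PowerSeries R) * PowerSeries.mk s), coe_inj.mp ?_⟩
    rw [Polynomial.coe_mul, Polynomial.coe_mul, hS, Polynomial.coe_neg, htrunc]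
    push_cast
    ring
  · rintro ⟨r, hr⟩ n
    have hunit : IsUnit (1 - PowerSeries.X ^ T : PowerSeries R) :=
      PowerSeries.isUnit_iff_constantCoeff.mpr (by simp [hT.ne'])
    have hur : (u : PowerSeries R) * PowerSeries.mk s = ((-r : R[X]) : PowerSeries R) := by
      refine hunit.mul_left_cancel ?_
      rw [mul_left_comm, ← hS, ← Polynomial.coe_mul, hr]
      push_cast
      ring
    rw [hur, coeff_coe, coeff_neg, neg_eq_zero]
    by_cases hr0 : r = 0
    · rw [hr0, coeff_zero]
    apply coeff_eq_zero_of_natDegree_lt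
    have hSdeg : (∑ n ∈ range T, C (s n) * X ^ n : R[X]).natDegree ≤ T - 1 :=
      natDegree_sum_le_of_forall_le _ _ fun i hi =>
        (natDegree_C_mul_X_pow_le _ _).trans (by rw [mem_range] at hi; omega)
    have huS := congrArg natDegree hr
    rw [Monic.natDegree_mul' (leadingCoeff_X_pow_sub_one hT) hr0, natDegree_X_pow_sub_one] at huS
    have := natDegree_mul_le (p := u) (q := ∑ n ∈ range T, C (s n) * X ^ n)
    omega

theorem EuclideanDomain.dvd_mul_iff_div_gcd_dvd {R : Type*} [EuclideanDomain R] [DecidableEq R]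
    {a b c : R} (ha : a ≠ 0) : a ∣ c * b ↔ a / gcd a b ∣ c := by
  have hg : gcd a b ≠ 0 := fun h => ha (EuclideanDomain.gcd_eq_zero_iff.mp h).1
  have ha' := EuclideanDomain.mul_div_cancel' hg (gcd_dvd_left a b)
  have hb' := EuclideanDomain.mul_div_cancel' hg (gcd_dvd_right a b)
  have hcop : IsCoprime (a / gcd a b) (b / gcd a b) := by
    refine ⟨gcdA a b, gcdB a b, mul_left_cancel₀ hg ?_⟩
    linear_combination gcdA a b * ha' + gcdB a b * hb' - gcd_eq_gcd_ab a b
  calc a ∣ c * b ↔ gcd a b * (a / gcd a b) ∣ gcd a b * (c * (b / gcd a b)) := by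
        rw [ha', mul_left_comm, hb']
    _ ↔ a / gcd a b ∣ c * (b / gcd a b) := mul_dvd_mul_iff_left hg
    _ ↔ a / gcd a b ∣ c := ⟨hcop.dvd_of_dvd_mul_right, fun h => h.mul_right _⟩

theorem Polynomial.exists_coeff_zero_eq_one_natDegree_le_dvd_iff {K : Type*} [Field K]
    {q : K[X]} (hq : q.coeff 0 ≠ 0) {L : ℕ} :
    (∃ u : K[X], u.coeff 0 = 1 ∧ u.natDegree ≤ L ∧ q ∣ u) ↔ q.natDegree ≤ L := by
  refine ⟨fun ⟨u, hu0, huL, hqu⟩ => ?_, fun h => ?_⟩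
  · exact (natDegree_le_of_dvd hqu fun h => by simp [h] at hu0).trans huL
  · exact ⟨C (q.coeff 0)⁻¹ * q, by rw [coeff_C_mul, inv_mul_cancel₀ hq],
      (natDegree_C_mul_le _ _).trans h, dvd_mul_left _ _⟩

theorem linearComplexity_eq_period_sub_gcd_degree (s : ℕ → ZMod 2) (T : ℕ) (hT : 0 < T)
    (hper : ∀ n, s (n + T) = s n) :
    LinearComplexity s =
      T - (EuclideanDomain.gcd ((X : Polynomial (ZMod 2)) ^ T - 1)
        (∑ n ∈ Finset.range T, C (s n) * X ^ n)).natDegree := by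
  set P : (ZMod 2)[X] := X ^ T - 1
  set g := EuclideanDomain.gcd P (∑ n ∈ range T, C (s n) * X ^ n)
  have hP : P.Monic := leadingCoeff_X_pow_sub_one hT
  have hg : g ≠ 0 := fun h => hP.ne_zero (EuclideanDomain.gcd_eq_zero_iff.mp h).1
  have hgq : g * (P / g) = P :=
    EuclideanDomain.mul_div_cancel' hg (EuclideanDomain.gcd_dvd_left _ _)
  have hq : (P / g).coeff 0 ≠ 0 := fun h => by
    have := X_dvd_iff.mp ((X_dvd_iff.mpr h).trans (Dvd.intro_left g hgq))
    simp [P, hT.ne] at this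
  have hrec (L : ℕ) : HasLinearRecurrence s L ↔ (P / g).natDegree ≤ L := by
    rw [hasLinearRecurrence_iff_exists_polynomial,
      ← exists_coeff_zero_eq_one_natDegree_le_dvd_iff hq]
    refine exists_congr fun u => and_congr_right fun _ => and_congr_right fun hu => ?_
    rw [Function.Periodic.forall_coeff_add_coe_mul_mk_eq_zero_iff_dvd hper hT hu,
      EuclideanDomain.dvd_mul_iff_div_gcd_dvd hP.ne_zero]
  have hdeg : (P / g).natDegree = T - g.natDegree := by
    have := congrArg natDegree hgq
    rw [natDegree_mul hg fun h => hq (by rw [h, coeff_zero]), natDegree_X_pow_sub_one] at this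
    omega
  calc LinearComplexity s = sInf (Set.Ici (P / g).natDegree) := congrArg sInf (Set.ext hrec)
    _ = T - g.natDegree := by rw [csInf_Ici, hdeg]
end

section
/- Let p ≥ 5 be prime and let q₀ < q₁ < ... be the quadratic residues mod p in increasing order. Define tₙ = 1 if qₙ₊₁ = qₙ + 1 and tₙ = 0 otherwise, for 0 ≤ n ≤ (p-5)/2. Then the number of n with tₙ = 1 equals (p-3)/4 if p ≡ 3 (mod 4) and (p-5)/4 if p ≡ 1 (mod 4). -/
/-!
Let `χ` be the quadratic character of `𝔽_p`. For `b ∉ {0, -1}` the product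
`(1 + χ b) (1 + χ (b + 1))` is `4` when `b` and `b + 1` are both squares and `0` otherwise.
Summing it over all of `𝔽_p`, with `∑ χ b = 0` and the Jacobi sum `∑ χ b χ (b + 1) = -1`, gives
`4 N = p - 4 - χ (-1)` for the number `N` of such `b`, and `χ (-1) = ±1` according as
`p ≡ ±1 (mod 4)`. Since the `qₙ` list the residues in increasing order, `qₙ₊₁ = qₙ + 1` holds
exactly when `qₙ` and `qₙ + 1` are both residues, so the count of `tₙ = 1` is `N`.
-/

open Finset

section QuadraticChar

variable {F : Type*} [Field F] [Fintype F] [DecidableEq F]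

theorem sum_quadraticChar_mul_quadraticChar_add_one (hF : ringChar F ≠ 2) :
    ∑ b : F, quadraticChar F b * quadraticChar F (b + 1) = -1 := by
  -- `b ↦ -b` turns the sum into `χ (-1) J(χ, χ)`, and `J(χ, χ) = J(χ, χ⁻¹) = -χ (-1)`.
  have hJ := jacobiSum_nontrivial_inv (quadraticChar_ne_one hF)
  rw [(quadraticChar_isQuadratic F).inv, jacobiSum] at hJ
  have hneg : ∑ b : F, quadraticChar F b * quadraticChar F (b + 1) =
      quadraticChar F (-1) * ∑ x : F, quadraticChar F x * quadraticChar F (1 - x) := by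
    rw [Finset.mul_sum]
    refine Fintype.sum_equiv (Equiv.neg F) _ _ fun b => ?_
    simp only [Equiv.neg_apply, sub_neg_eq_add, add_comm (1 : F)]
    rw [← mul_assoc, ← map_mul (quadraticChar F) (-1), neg_one_mul, neg_neg]
  rw [hneg, hJ, mul_neg, ← sq, quadraticChar_sq_one (neg_ne_zero.mpr one_ne_zero)]

theorem one_add_quadraticChar_of_ne_zero {a : F} (ha : a ≠ 0) :
    1 + quadraticChar F a = if IsSquare a then 2 else 0 := by
  simp only [quadraticChar_apply, quadraticCharFun, ha, if_false]
  split_ifs <;> norm_num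

theorem one_add_quadraticChar_mul_one_add_quadraticChar_add_one (b : F) :
    (1 + quadraticChar F b) * (1 + quadraticChar F (b + 1)) =
      (if (b ≠ 0 ∧ IsSquare b) ∧ (b + 1 ≠ 0 ∧ IsSquare (b + 1)) then 4 else 0) +
        (if b = 0 then 2 else 0) + (if b = -1 then 1 + quadraticChar F (-1) else 0) := by
  have hne : (0 : F) ≠ -1 := (neg_ne_zero.mpr one_ne_zero).symm
  by_cases hb0 : b = 0
  · subst hb0; simp [hne]
  by_cases hb1 : b = -1
  · subst hb1; simp
  have hb1' : b + 1 ≠ 0 := fun h => hb1 (eq_neg_of_add_eq_zero_left h)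
  rw [one_add_quadraticChar_of_ne_zero hb0, one_add_quadraticChar_of_ne_zero hb1']
  split_ifs <;> simp_all

theorem sum_quadraticChar_add_one (hF : ringChar F ≠ 2) :
    ∑ b : F, quadraticChar F (b + 1) = 0 :=
  (Equiv.sum_comp (Equiv.addRight (1 : F)) (quadraticChar F)).trans (quadraticChar_sum_zero hF)

theorem four_mul_card_consecutive_squares (hF : ringChar F ≠ 2) :
    4 * (#{b : F | (b ≠ 0 ∧ IsSquare b) ∧ (b + 1 ≠ 0 ∧ IsSquare (b + 1))} : ℤ) =
      Fintype.card F - 4 - quadraticChar F (-1) := by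
  have hexpand : ∑ b : F, (1 + quadraticChar F b) * (1 + quadraticChar F (b + 1)) =
      Fintype.card F - 1 := by
    simp only [add_mul, one_mul, mul_add, mul_one, sum_add_distrib, sum_const, card_univ,
      nsmul_eq_mul, mul_one, quadraticChar_sum_zero hF, sum_quadraticChar_add_one hF,
      sum_quadraticChar_mul_quadraticChar_add_one hF]
    ring
  rw [sum_congr rfl fun b _ => one_add_quadraticChar_mul_one_add_quadraticChar_add_one b, sum_add_distrib,
    sum_add_distrib, ← sum_filter, sum_const, sum_ite_eq', sum_ite_eq', if_pos (mem_univ _),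
    if_pos (mem_univ _), nsmul_eq_mul] at hexpand
  linear_combination hexpand

end QuadraticChar

theorem card_filter_succ_eq_card_filter_add_one_mem {q : ℕ → ℕ} {K : ℕ}
    (hq : StrictMonoOn q (Set.Iic K)) :
    #{n ∈ range K | q (n + 1) = q n + 1} =
      #{m ∈ (range (K + 1)).image q | m + 1 ∈ (range (K + 1)).image q} := by
  refine card_bij (fun n _ => q n) ?_ ?_ ?_
  · intro n hn
    obtain ⟨hnK, hsucc⟩ := mem_filter.mp hn
    rw [mem_range] at hnK
    refine mem_filter.mpr ⟨mem_image_of_mem q (mem_range.mpr (by omega)), ?_⟩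
    exact hsucc ▸ mem_image_of_mem q (mem_range.mpr (by omega))
  · intro i hi j hj hij
    simp only [mem_filter, mem_range] at hi hj
    exact hq.injOn (Set.mem_Iic.mpr hi.1.le) (Set.mem_Iic.mpr hj.1.le) hij
  · intro m hm
    simp only [mem_filter, mem_image, mem_range, Nat.lt_succ_iff] at hm
    obtain ⟨⟨i, hi, rfl⟩, j, hj, hij⟩ := hm
    have hlt : i < j := (hq.lt_iff_lt hi hj).mp (by omega)
    have hj_eq : j = i + 1 := by
      by_contra hne
      have h1 := hq (Set.mem_Iic.mpr (by omega : i ≤ K)) (Set.mem_Iic.mpr (by omega : i + 1 ≤ K))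
        (Nat.lt_succ_self i)
      have h2 := hq (Set.mem_Iic.mpr (by omega : i + 1 ≤ K)) hj (by omega : i + 1 < j)
      omega
    subst hj_eq
    exact ⟨i, mem_filter.mpr ⟨mem_range.mpr (by omega), hij⟩, rfl⟩

theorem isSquare_natCast_iff_exists_pow_two_mod_eq {n m : ℕ} [NeZero n] (hm : m < n) :
    IsSquare (m : ZMod n) ↔ ∃ x : ℕ, x ^ 2 % n = m := by
  constructor
  · rintro ⟨y, hy⟩
    refine ⟨y.val, ?_⟩
    calc y.val ^ 2 % n = ((y.val ^ 2 : ℕ) : ZMod n).val := (ZMod.val_natCast _ _).symm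
      _ = (m : ZMod n).val := by rw [hy]; push_cast; rw [ZMod.natCast_zmod_val, sq]
      _ = m := ZMod.val_cast_of_lt hm
  · rintro ⟨x, rfl⟩
    exact ⟨x, by rw [ZMod.natCast_mod]; push_cast; ring⟩

theorem pos_and_le_pred_and_exists_pow_two_mod_eq_iff {n m : ℕ} [NeZero n] :
    (1 ≤ m ∧ m ≤ n - 1 ∧ ∃ x : ℕ, x ^ 2 % n = m) ↔
      m < n ∧ (m : ZMod n) ≠ 0 ∧ IsSquare (m : ZMod n) := by
  have hn := NeZero.pos n
  constructor
  · rintro ⟨h1, h2, hx⟩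
    have hm : m < n := by omega
    refine ⟨hm, ?_, (isSquare_natCast_iff_exists_pow_two_mod_eq hm).mpr hx⟩
    rw [Ne, ← ZMod.val_eq_zero, ZMod.val_cast_of_lt hm]
    omega
  · rintro ⟨hm, h0, hsq⟩
    have h1 : m ≠ 0 := by rintro rfl; exact h0 Nat.cast_zero
    exact ⟨by omega, by omega, (isSquare_natCast_iff_exists_pow_two_mod_eq hm).mp hsq⟩

theorem card_filter_add_one_mem_eq_card_zmod {n : ℕ} [NeZero n] {S : Finset ℕ} {P : ZMod n → Prop}
    [DecidablePred P] (hS : ∀ m, m ∈ S ↔ m < n ∧ P m) (h0 : ¬P 0) :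
    #{m ∈ S | m + 1 ∈ S} = #{b : ZMod n | P b ∧ P (b + 1)} := by
  refine card_nbij' (fun m => (m : ZMod n)) ZMod.val ?_ ?_ ?_ ?_
  · intro m hm
    simp only [coe_filter, Set.mem_ofPred_eq, hS] at hm
    simp only [coe_filter, mem_univ, true_and, Set.mem_ofPred_eq]
    exact ⟨hm.1.2, by exact_mod_cast hm.2.2⟩
  · intro b hb
    simp only [coe_filter, mem_univ, true_and, Set.mem_ofPred_eq] at hb
    have hcast : ((b.val + 1 : ℕ) : ZMod n) = b + 1 := by push_cast; rw [ZMod.natCast_zmod_val]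
    have hlt : b.val + 1 < n := by
      refine lt_of_le_of_ne (ZMod.val_lt b) fun h => h0 ?_
      rw [h, ZMod.natCast_self] at hcast
      exact hcast ▸ hb.2
    simp only [coe_filter, Set.mem_ofPred_eq, hS, ZMod.natCast_zmod_val, hcast]
    exact ⟨⟨ZMod.val_lt b, hb.1⟩, hlt, hb.2⟩
  · intro m hm
    simp only [coe_filter, Set.mem_ofPred_eq, hS] at hm
    exact ZMod.val_cast_of_lt hm.1.1
  · intro b _
    exact ZMod.natCast_zmod_val b

theorem count_tn_eq_one (p : ℕ) (hp : p.Prime) (hp5 : 5 ≤ p) (q : ℕ → ℕ)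
    (hmono : ∀ i j : ℕ, i < j → j ≤ (p - 3) / 2 → q i < q j)
    (hbij : ∀ m : ℕ, (1 ≤ m ∧ m ≤ p - 1 ∧ ∃ x : ℕ, x ^ 2 % p = m) ↔
      ∃ n ≤ (p - 3) / 2, q n = m)
    (t : ℕ → ℕ) (ht : ∀ n ≤ (p - 5) / 2, t n = if q (n + 1) = q n + 1 then 1 else 0) :
    ((Finset.range ((p - 3) / 2)).filter (fun n => t n = 1)).card =
      if p % 4 = 3 then (p - 3) / 4 else (p - 5) / 4 := by
  have : Fact p.Prime := ⟨hp⟩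
  have ht' : {n ∈ range ((p - 3) / 2) | t n = 1} =
      {n ∈ range ((p - 3) / 2) | q (n + 1) = q n + 1} :=
    filter_congr fun n hn => by rw [ht n (by rw [mem_range] at hn; omega)]; split_ifs <;> simp_all
  have hresidues : ∀ m, m ∈ (range ((p - 3) / 2 + 1)).image q ↔
      m < p ∧ ((m : ZMod p) ≠ 0 ∧ IsSquare (m : ZMod p)) := fun m => by
    simp only [mem_image, mem_range, Nat.lt_succ_iff, ← hbij,
      pos_and_le_pred_and_exists_pow_two_mod_eq_iff]
  have hchar : ringChar (ZMod p) ≠ 2 := by rw [ZMod.ringChar_zmod_n]; omega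
  have hcount := four_mul_card_consecutive_squares hchar
  rw [quadraticChar_neg_one hchar, ZMod.card] at hcount
  rw [ht', card_filter_succ_eq_card_filter_add_one_mem (fun i _ j hj hij => hmono i j hij hj),
    card_filter_add_one_mem_eq_card_zmod (P := fun b => b ≠ 0 ∧ IsSquare b) hresidues
      (fun h => h.1 rfl)]
  have hodd : p % 2 = 1 := Nat.odd_iff.mp (hp.odd_of_ne_two (by omega))
  rcases (by omega : p % 4 = 1 ∨ p % 4 = 3) with h | h
  · rw [ZMod.χ₄_nat_one_mod_four h] at hcount
    rw [if_neg (by omega)]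
    omega
  · rw [ZMod.χ₄_nat_three_mod_four h] at hcount
    rw [if_pos h]
    omega
end

section
/- For every prime p > 25, there exists n with 1 ≤ n ≤ p-3 such that the Legendre symbols satisfy (n/p) = 1, ((n+1)/p) = -1, and ((n+2)/p) = 1. -/
/-!
For `m = (t² + 1) / (2t)` one has `m ∓ 1 = (t ∓ 1)² / (2t)`, so the pattern `(1, -1, 1)` at
`m - 1, m, m + 1` follows from any `t ≠ -1` with `χ(2t) = 1` and `χ(t² + 1) = -1`. Weight each
`t` by `(1 + χ(2t))(1 - χ(t² + 1))`: this is `4` at such `t` and, outside a set of at most four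
points, `0` at every other `t`. The total weight is `q + 1 - χ(2) J`, where `J = J(1)` for the
Jacobsthal sum `J(n) = ∑ χ(x) χ(x² + n)`. Since `J(k² n) = χ(k) J(n)` and `∑ₙ J(n)² ≤ 2q²`
(orthogonality of shifted characters), `(q - 1) J² ≤ 4q²`; so `|J|` is at most about `2√q`,
and the total weight exceeds `16` once `q > 25`.
-/

open Finset

section FiniteField

variable {F : Type*} [Field F] [Fintype F] [DecidableEq F]

local notation "χ" => quadraticChar F
local notation "q" => (Fintype.card F : ℤ)

theorem abs_quadraticChar_le_one (a : F) : |χ a| ≤ 1 := by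
  rcases quadraticChar_isQuadratic F a with h | h | h <;> rw [h] <;> norm_num

theorem sum_quadraticChar_sq : ∑ x : F, χ x ^ 2 = q - 1 := by
  have h : ∀ x : F, χ x ^ 2 = 1 - if x = 0 then 1 else 0 := fun x => by
    split_ifs with hx
    · rw [hx, quadraticChar_zero]; norm_num
    · rw [quadraticChar_sq_one hx, sub_zero]
  rw [Finset.sum_congr rfl fun x _ => h x, Finset.sum_sub_distrib, Finset.sum_ite_eq']
  simp

theorem sum_quadraticChar_mul_add (hF : ringChar F ≠ 2) (c : F) :
    ∑ x : F, χ x * χ (x + c) = (if c = 0 then q else 0) - 1 := by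
  rcases eq_or_ne c 0 with rfl | hc
  · simp only [add_zero, ← sq, sum_quadraticChar_sq, if_true]
  have hJ : jacobiSum χ χ = -χ (-1) := by
    simpa only [(quadraticChar_isQuadratic F).inv] using
      jacobiSum_nontrivial_inv (quadraticChar_ne_one hF)
  calc ∑ x : F, χ x * χ (x + c) = ∑ y : F, χ (-c * y) * χ (-c * y + c) :=
        (Equiv.sum_comp (Equiv.mulLeft₀ (-c) (neg_ne_zero.mpr hc)) _).symm
    _ = χ (-1 * c ^ 2) * jacobiSum χ χ := by
        rw [jacobiSum, Finset.mul_sum]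
        refine Finset.sum_congr rfl fun y _ => ?_
        rw [show -c * y + c = c * (1 - y) by ring, show -c * y = -1 * c * y by ring]
        simp only [map_mul, map_pow]
        ring
    _ = -1 := by
        rw [map_mul, quadraticChar_sq_one' hc, hJ, mul_one, mul_neg, ← sq,
          quadraticChar_sq_one (neg_ne_zero.mpr one_ne_zero)]
    _ = _ := by rw [if_neg hc, zero_sub]

theorem sum_quadraticChar_add_mul_add (hF : ringChar F ≠ 2) (a b : F) :
    ∑ x : F, χ (x + a) * χ (x + b) = (if a = b then q else 0) - 1 := by
  have h := Equiv.sum_comp (Equiv.addRight a) fun y => χ y * χ (y + (b - a))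
  simp only [Equiv.coe_addRight, add_add_sub_cancel] at h
  simp only [h, sum_quadraticChar_mul_add hF, sub_eq_zero, @eq_comm _ b a]

theorem sum_comp_sq (hF : ringChar F ≠ 2) (g : F → ℤ) :
    ∑ x : F, g (x ^ 2) = ∑ y : F, (χ y + 1) * g y := by
  rw [← Finset.sum_fiberwise' univ (· ^ 2) g]
  refine Finset.sum_congr rfl fun y _ => ?_
  rw [Finset.sum_const, ← quadraticChar_card_sqrts hF y, nsmul_eq_mul, Set.toFinset_ofPred]

theorem sum_quadraticChar_sq_add_one (hF : ringChar F ≠ 2) : ∑ x : F, χ (x ^ 2 + 1) = -1 := by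
  have hshift := Equiv.sum_comp (Equiv.addRight (1 : F)) χ
  simp only [Equiv.coe_addRight] at hshift
  simp only [sum_comp_sq hF (fun y => χ (y + 1)), add_mul, one_mul, Finset.sum_add_distrib,
    sum_quadraticChar_mul_add hF, hshift, quadraticChar_sum_zero hF, one_ne_zero, if_false]
  norm_num

variable (F) in
def jacobsthalSum (n : F) : ℤ := ∑ x : F, χ x * χ (x ^ 2 + n)

theorem jacobsthalSum_zero (hF : ringChar F ≠ 2) : jacobsthalSum F 0 = 0 := by
  have h : ∀ x : F, χ x * χ (x ^ 2 + 0) = χ x := fun x => by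
    rcases eq_or_ne x 0 with rfl | hx
    · rw [quadraticChar_zero, zero_mul]
    · rw [add_zero, quadraticChar_sq_one' hx, mul_one]
  rw [jacobsthalSum, Finset.sum_congr rfl fun x _ => h x, quadraticChar_sum_zero hF]

theorem jacobsthalSum_sq_mul (hF : ringChar F ≠ 2) (k n : F) :
    jacobsthalSum F (k ^ 2 * n) = χ k * jacobsthalSum F n := by
  rcases eq_or_ne k 0 with rfl | hk
  · rw [sq, zero_mul, zero_mul, jacobsthalSum_zero hF, quadraticChar_zero, zero_mul]
  rw [jacobsthalSum, jacobsthalSum, Finset.mul_sum,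
    ← Equiv.sum_comp (Equiv.mulLeft₀ k hk)]
  refine Finset.sum_congr rfl fun x _ => ?_
  rw [Equiv.mulLeft₀_apply, show (k * x) ^ 2 + k ^ 2 * n = k ^ 2 * (x ^ 2 + n) by ring, map_mul,
    map_mul, quadraticChar_sq_one' hk]
  ring

theorem sum_jacobsthalSum_sq_le (hF : ringChar F ≠ 2) :
    ∑ n : F, jacobsthalSum F n ^ 2 ≤ 2 * q ^ 2 := by
  have hpair : ∀ x y : F, (if x ^ 2 = y ^ 2 then χ x * χ y else 0) ≤
      (if y = x then 1 else 0) + (if y = -x then 1 else 0) := fun x y => by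
    have hxy : χ x * χ y ≤ 1 := by
      rw [← map_mul]; exact (abs_le.mp (abs_quadraticChar_le_one _)).2
    split_ifs <;> grind [sq_eq_sq_iff_eq_or_eq_neg]
  have hcross : ∑ x : F, ∑ y : F, χ x * χ y = 0 := by
    rw [← Finset.sum_mul_sum, quadraticChar_sum_zero hF, zero_mul]
  calc ∑ n : F, jacobsthalSum F n ^ 2
      = ∑ x : F, ∑ y : F, χ x * χ y * ∑ n : F, χ (n + x ^ 2) * χ (n + y ^ 2) := by
        have hsq (n : F) : jacobsthalSum F n ^ 2 =
            ∑ x : F, ∑ y : F, χ x * χ y * (χ (n + x ^ 2) * χ (n + y ^ 2)) := by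
          rw [pow_two (jacobsthalSum F n), jacobsthalSum, Finset.sum_mul_sum]
          refine Finset.sum_congr rfl fun x _ => Finset.sum_congr rfl fun y _ => ?_
          rw [add_comm n, add_comm n]
          ring
        simp only [hsq, Finset.mul_sum]
        rw [Finset.sum_comm]
        exact Finset.sum_congr rfl fun x _ => Finset.sum_comm
    _ = ∑ x : F, ∑ y : F, (q * (if x ^ 2 = y ^ 2 then χ x * χ y else 0) - χ x * χ y) := by
        simp only [sum_quadraticChar_add_mul_add hF]
        refine Finset.sum_congr rfl fun x _ => Finset.sum_congr rfl fun y _ => ?_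
        split_ifs <;> ring
    _ = q * ∑ x : F, ∑ y : F, (if x ^ 2 = y ^ 2 then χ x * χ y else 0) := by
        simp only [Finset.sum_sub_distrib, hcross, sub_zero, Finset.mul_sum]
    _ ≤ q * ∑ x : F, 2 := by
        gcongr with x
        calc ∑ y : F, (if x ^ 2 = y ^ 2 then χ x * χ y else 0)
            ≤ ∑ y : F, ((if y = x then 1 else 0) + (if y = -x then 1 else 0)) :=
              Finset.sum_le_sum fun y _ => hpair x y
          _ = 2 := by rw [Finset.sum_add_distrib, Finset.sum_ite_eq', Finset.sum_ite_eq']; simp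
    _ = 2 * q ^ 2 := by
        rw [Finset.sum_const, Finset.card_univ, nsmul_eq_mul]; ring

theorem jacobsthalSum_one_sq_le (hF : ringChar F ≠ 2) :
    (q - 1) * jacobsthalSum F 1 ^ 2 ≤ 4 * q ^ 2 :=
  calc (q - 1) * jacobsthalSum F 1 ^ 2 = ∑ k : F, jacobsthalSum F (k ^ 2) ^ 2 := by
        have h (k : F) : jacobsthalSum F (k ^ 2) ^ 2 = χ k ^ 2 * jacobsthalSum F 1 ^ 2 := by
          rw [← mul_one (k ^ 2), jacobsthalSum_sq_mul hF, mul_pow]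
        rw [Finset.sum_congr rfl fun k _ => h k, ← Finset.sum_mul, sum_quadraticChar_sq]
    _ = ∑ y : F, (χ y + 1) * jacobsthalSum F y ^ 2 :=
        sum_comp_sq hF fun y => jacobsthalSum F y ^ 2
    _ ≤ ∑ y : F, 2 * jacobsthalSum F y ^ 2 := by
        gcongr with y
        linarith [(abs_le.mp (abs_quadraticChar_le_one y)).2]
    _ ≤ 4 * q ^ 2 := by
        rw [← Finset.mul_sum]
        linarith [sum_jacobsthalSum_sq_le hF]

theorem sum_one_add_quadraticChar_two_mul_mul_one_sub (hF : ringChar F ≠ 2) :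
    ∑ t : F, (1 + χ (2 * t)) * (1 - χ (t ^ 2 + 1)) = q + 1 - χ 2 * jacobsthalSum F 1 := by
  have h (t : F) : (1 + χ (2 * t)) * (1 - χ (t ^ 2 + 1)) =
      1 + χ 2 * χ t - χ (t ^ 2 + 1) - χ 2 * (χ t * χ (t ^ 2 + 1)) := by
    rw [map_mul]; ring
  simp only [h, Finset.sum_sub_distrib, Finset.sum_add_distrib, ← Finset.mul_sum,
    quadraticChar_sum_zero hF, sum_quadraticChar_sq_add_one hF, jacobsthalSum]
  rw [Finset.sum_const, Finset.card_univ, nsmul_eq_mul]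
  ring

theorem exists_quadraticChar_two_mul_eq_one_sq_add_one_eq_neg_one (hF : ringChar F ≠ 2)
    (hq : 25 < Fintype.card F) : ∃ t : F, t ≠ -1 ∧ χ (2 * t) = 1 ∧ χ (t ^ 2 + 1) = -1 := by
  by_contra! hnone
  let f : F → ℤ := fun t => (1 + χ (2 * t)) * (1 - χ (t ^ 2 + 1))
  let S : Finset F := {0, -1} ∪ {x : F | x ^ 2 = -1}.toFinset
  have hf_le (t : F) : f t ≤ 4 := by
    have h1 := abs_le.mp (abs_quadraticChar_le_one (2 * t))
    have h2 := abs_le.mp (abs_quadraticChar_le_one (t ^ 2 + 1))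
    nlinarith
  have hf_zero (t : F) (ht : t ∉ S) : f t = 0 := by
    simp only [S, Finset.mem_union, Finset.mem_insert, Finset.mem_singleton, Set.mem_toFinset,
      Set.mem_ofPred_eq, not_or] at ht
    obtain ⟨⟨ht0, ht1⟩, htsq⟩ := ht
    have h2t : 2 * t ≠ 0 := mul_ne_zero (Ring.two_ne_zero hF) ht0
    have htsq' : t ^ 2 + 1 ≠ 0 := fun h => htsq (eq_neg_of_add_eq_zero_left h)
    rcases quadraticChar_dichotomy h2t with h | h
    · have := (quadraticChar_dichotomy htsq').resolve_right (hnone t ht1 h)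
      simp only [f, h, this]; norm_num
    · simp only [f, h]; norm_num
  have hS : #S ≤ 4 := by
    have hsqrt : #{x : F | x ^ 2 = -1}.toFinset ≤ 2 := by
      have := quadraticChar_card_sqrts hF (-1)
      have := (abs_le.mp (abs_quadraticChar_le_one (-1 : F))).2
      omega
    calc #S ≤ #({0, -1} : Finset F) + #{x : F | x ^ 2 = -1}.toFinset := Finset.card_union_le _ _
      _ ≤ 2 + 2 := add_le_add Finset.card_le_two hsqrt
  have hsum_le : ∑ t, f t ≤ 16 :=
    calc ∑ t, f t = ∑ t ∈ S, f t :=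
          (Finset.sum_subset (Finset.subset_univ S) fun t _ ht => hf_zero t ht).symm
      _ ≤ ∑ _t ∈ S, 4 := Finset.sum_le_sum fun t _ => hf_le t
      _ ≤ 16 := by simp only [Finset.sum_const, nsmul_eq_mul]; norm_cast; omega
  have hsum := sum_one_add_quadraticChar_two_mul_mul_one_sub hF
  have hχ2 : χ 2 ^ 2 = 1 := quadraticChar_sq_one (Ring.two_ne_zero hF)
  have hbound := jacobsthalSum_one_sq_le hF
  have hq' : (26 : ℤ) ≤ q := by exact_mod_cast hq
  -- so `χ 2 * jacobsthalSum F 1 ≥ q - 15`, while `(q - 1) * (q - 15) ^ 2 > 4 * q ^ 2` for `q ≥ 26`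
  nlinarith

theorem quadraticChar_eq_of_mul_eq {a b c : F} (h : a * b = c) (hb : χ b = 1) : χ a = χ c := by
  rw [← h, map_mul, hb, mul_one]

theorem exists_quadraticChar_pattern (hF : ringChar F ≠ 2) (hq : 25 < Fintype.card F) :
    ∃ m : F, χ (m - 1) = 1 ∧ χ m = -1 ∧ χ (m + 1) = 1 := by
  obtain ⟨t, ht, h2t, htsq⟩ := exists_quadraticChar_two_mul_eq_one_sq_add_one_eq_neg_one hF hq
  have h2t0 : 2 * t ≠ 0 := fun h => by simp [h] at h2t
  have ht1 : t - 1 ≠ 0 := fun h => by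
    rw [sub_eq_zero.mp h, mul_one] at h2t
    rw [sub_eq_zero.mp h, one_pow, one_add_one_eq_two, h2t] at htsq
    norm_num at htsq
  have ht1' : t + 1 ≠ 0 := fun h => ht (eq_neg_of_add_eq_zero_left h)
  refine ⟨(t ^ 2 + 1) / (2 * t), ?_, ?_, ?_⟩
  · rw [quadraticChar_eq_of_mul_eq (c := (t - 1) ^ 2)
      (by rw [sub_mul, div_mul_cancel₀ _ h2t0]; ring) h2t,
      quadraticChar_sq_one' ht1]
  · rw [quadraticChar_eq_of_mul_eq (div_mul_cancel₀ _ h2t0) h2t, htsq]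
  · rw [quadraticChar_eq_of_mul_eq (c := (t + 1) ^ 2)
      (by rw [add_mul, div_mul_cancel₀ _ h2t0]; ring) h2t,
      quadraticChar_sq_one' ht1']

end FiniteField

theorem exists_nat_legendreSym_pattern {p : ℕ} [Fact p.Prime] {m : ZMod p}
    (hprev : quadraticChar (ZMod p) (m - 1) = 1) (hmid : quadraticChar (ZMod p) m = -1)
    (hnext : quadraticChar (ZMod p) (m + 1) = 1) :
    ∃ n : ℕ, 1 ≤ n ∧ n ≤ p - 3 ∧ legendreSym p (n : ℤ) = 1 ∧
      legendreSym p ((n : ℤ) + 1) = -1 ∧ legendreSym p ((n : ℤ) + 2) = 1 := by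
  have hcast : ((m - 1).val : ZMod p) = m - 1 := ZMod.natCast_zmod_val _
  have hwrap (k : ℕ) (h : (m - 1).val + k = p) : m - 1 + k = 0 := by
    rw [← hcast, ← Nat.cast_add, h, ZMod.natCast_self]
  have hm_ne : m ≠ 0 := fun h => by simp [h] at hmid
  have hm_add_ne : m + 1 ≠ 0 := fun h => by simp [h] at hnext
  have hm_sub_ne : m - 1 ≠ 0 := fun h => by simp [h] at hprev
  have hlt := ZMod.val_lt (m - 1)
  have hne1 : (m - 1).val + 1 ≠ p := fun h => hm_ne (by linear_combination hwrap 1 h)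
  have hne2 : (m - 1).val + 2 ≠ p := fun h => hm_add_ne (by linear_combination hwrap 2 h)
  refine ⟨(m - 1).val, ZMod.val_pos.mpr hm_sub_ne, by omega, ?_, ?_, ?_⟩
  · rw [legendreSym, Int.cast_natCast, hcast, hprev]
  · rw [legendreSym, Int.cast_add, Int.cast_natCast, hcast, Int.cast_one, sub_add_cancel, hmid]
  · rw [legendreSym, Int.cast_add, Int.cast_natCast, hcast, Int.cast_ofNat,
      show m - 1 + 2 = m + 1 by ring, hnext]

theorem exists_pattern_1m1 (p : ℕ) (hp : Fact p.Prime) (hp25 : 25 < p) :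
    ∃ n : ℕ, 1 ≤ n ∧ n ≤ p - 3 ∧ legendreSym p (n : ℤ) = 1 ∧
      legendreSym p ((n : ℤ) + 1) = -1 ∧ legendreSym p ((n : ℤ) + 2) = 1 := by
  have hchar : ringChar (ZMod p) ≠ 2 := by rw [ZMod.ringChar_zmod_n]; omega
  obtain ⟨m, hprev, hmid, hnext⟩ := exists_quadraticChar_pattern hchar (by rwa [ZMod.card])
  exact exists_nat_legendreSym_pattern hprev hmid hnext
end

section
/- For any binary sequence (sₙ) and any N, the correlation measure of order 2 satisfies C₂(sₙ) ≥ M(sₙ) - 1, where M(sₙ) is the maximum order complexity. -/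
/-! If `M = M(sₙ) > 0`, minimality yields two distinct windows of length `M - 1` that coincide
but are followed by different symbols (otherwise the successor would be a function of the
window). Correlating the sequence with itself at these two shifts over the common window makes
every term of the sum `+1`, so `C₂(sₙ) ≥ M - 1`. -/

/-- The maximum order complexity of a binary sequence of length `N`: the least `M` such
that there is a function `f : 𝔽₂^M → 𝔽₂` with `s (n + M) = f (s n, …, s (n + M - 1))`
for all `n` with `n + M < N`. -/
noncomputable def MaxOrderComplexity (N : ℕ) (s : ℕ → ZMod 2) : ℕ :=
  sInf {M : ℕ | ∃ f : (Fin M → ZMod 2) → ZMod 2, ∀ n : ℕ, n + M < N →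
    s (n + M) = f (fun i => s (n + i))}

/-- The correlation measure of order `2` of a binary sequence of length `N`. -/
noncomputable def CorrelationMeasure2 (N : ℕ) (s : ℕ → ZMod 2) : ℕ :=
  sSup {v : ℕ | ∃ M d₁ d₂ : ℕ, d₁ < d₂ ∧ d₂ + M ≤ N ∧
    v = (∑ n ∈ Finset.range M, (-1 : ℤ) ^ ((s (n + d₁)).val + (s (n + d₂)).val)).natAbs}

open Finset

def correlationSum (s : ℕ → ZMod 2) (M d₁ d₂ : ℕ) : ℤ :=
  ∑ n ∈ range M, (-1 : ℤ) ^ ((s (n + d₁)).val + (s (n + d₂)).val)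

section Complexity

variable {N m : ℕ} {s : ℕ → ZMod 2}

theorem maxOrderComplexity_le_of_windows_eq
    (h : ∀ a b, a < b → b + m < N → (∀ n < m, s (n + a) = s (n + b)) →
      s (m + a) = s (m + b)) :
    MaxOrderComplexity N s ≤ m := by
  let window : {n // n + m < N} → Fin m → ZMod 2 := fun n i => s (n + i)
  let next : {n // n + m < N} → ZMod 2 := fun n => s (n + m)
  have hfactors : next.FactorsThrough window := by
    have hsymm : ∀ a b : {n // n + m < N}, a.1 < b.1 → window a = window b → next a = next b :=
      fun a b hab hwin => by
        simpa only [next, add_comm] using h a b hab b.2 fun n hn => by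
          simpa only [window, add_comm] using congrFun hwin ⟨n, hn⟩
    intro a b hwin
    rcases lt_trichotomy a.1 b.1 with hab | hab | hab
    · exact hsymm a b hab hwin
    · rw [Subtype.ext hab]
    · exact (hsymm b a hab hwin.symm).symm
  exact Nat.sInf_le ⟨Function.extend window next 0,
    fun n hn => (hfactors.extend_apply 0 ⟨n, hn⟩).symm⟩

theorem exists_windows_eq_of_lt_maxOrderComplexity (h : m < MaxOrderComplexity N s) :
    ∃ d₁ d₂, d₁ < d₂ ∧ d₂ + m < N ∧ (∀ n < m, s (n + d₁) = s (n + d₂)) ∧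
      s (m + d₁) ≠ s (m + d₂) := by
  by_contra! hc
  exact h.not_ge (maxOrderComplexity_le_of_windows_eq hc)

end Complexity

section Correlation

variable {N M d₁ d₂ : ℕ} {s : ℕ → ZMod 2}

theorem natAbs_correlationSum_le : (correlationSum s M d₁ d₂).natAbs ≤ M := by
  calc (correlationSum s M d₁ d₂).natAbs
      ≤ ∑ n ∈ range M, ((-1 : ℤ) ^ ((s (n + d₁)).val + (s (n + d₂)).val)).natAbs :=
        Int.natAbs_sum_le _ _
    _ = M := by simp [Int.natAbs_pow]

theorem natAbs_correlationSum_of_eq (h : ∀ n < M, s (n + d₁) = s (n + d₂)) :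
    (correlationSum s M d₁ d₂).natAbs = M := by
  have hterm : ∀ n ∈ range M, (-1 : ℤ) ^ ((s (n + d₁)).val + (s (n + d₂)).val) = 1 := by
    intro n hn
    rw [h n (mem_range.mp hn)]
    exact Even.neg_one_pow ⟨_, rfl⟩
  simp [correlationSum, sum_congr rfl hterm]

theorem natAbs_correlationSum_le_correlationMeasure2 (hd : d₁ < d₂) (hN : d₂ + M ≤ N) :
    (correlationSum s M d₁ d₂).natAbs ≤ CorrelationMeasure2 N s := by
  refine le_csSup ⟨N, ?_⟩ ⟨M, d₁, d₂, hd, hN, rfl⟩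
  rintro _ ⟨M', e₁, e₂, -, heN, rfl⟩
  exact natAbs_correlationSum_le.trans (by omega)

end Correlation

theorem correlation2_ge_maxOrderComplexity_sub_one (N : ℕ) (s : ℕ → ZMod 2) :
    MaxOrderComplexity N s - 1 ≤ CorrelationMeasure2 N s := by
  rcases Nat.eq_zero_or_pos (MaxOrderComplexity N s) with h0 | hpos
  · simp [h0]
  obtain ⟨d₁, d₂, hd, hdN, hwin, -⟩ :=
    exists_windows_eq_of_lt_maxOrderComplexity (Nat.sub_one_lt_of_lt hpos)
  calc MaxOrderComplexity N s - 1
      = (correlationSum s (MaxOrderComplexity N s - 1) d₁ d₂).natAbs :=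
        (natAbs_correlationSum_of_eq hwin).symm
    _ ≤ CorrelationMeasure2 N s := natAbs_correlationSum_le_correlationMeasure2 hd hdN.le
end
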